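/- arXiv:1412.4131 — 2 statements merged into one kernel-verified Lean document; each statement's English description precedes it below -/
import Mathlib

section
/- For any real numbers f ∈ ℝⁿ and c ∈ ℝ, and for any fixed a ∈ Z₂ⁿ, the sum over x ∈ Z₂ⁿ of (−1)^{a·x} cos(f·x + c) equals 2ⁿ · cos(c + Σₘ (aₘπ + fₘ)/2) · Πₘ cos((aₘπ + fₘ)/2). -/
/-!
Since `(-1)^k cos y = cos (y + kπ)`, the summand is `cos (c + Σₘ xₘ φₘ)` with `φₘ = aₘπ + fₘ`, the real
part of `e^{ic} Πₘ e^{i xₘ φₘ}`. Summing over the bits factorises the sum into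
`e^{ic} Πₘ (1 + e^{iφₘ})`, and `1 + e^{iφ} = 2 cos (φ/2) e^{iφ/2}`.
-/

theorem neg_one_pow_sum_mul_cos {ι : Type*} [Fintype ι] (a x : ι → ℕ) (f : ι → ℝ) (c : ℝ) :
    (-1 : ℝ) ^ (∑ m, a m * x m) * Real.cos ((∑ m, f m * (x m : ℝ)) + c)
      = Real.cos (c + ∑ m, (x m : ℝ) * ((a m : ℝ) * Real.pi + f m)) := by
  have hsum : ∑ m, (x m : ℝ) * ((a m : ℝ) * Real.pi + f m)
      = ∑ m, f m * (x m : ℝ) + ((∑ m, a m * x m : ℕ) : ℝ) * Real.pi := by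
    rw [Nat.cast_sum, Finset.sum_mul, ← Finset.sum_add_distrib]
    exact Finset.sum_congr rfl fun m _ => by push_cast; ring
  rw [hsum, ← Real.cos_add_nat_mul_pi]
  congr 1
  ring

section

open Complex

variable {ι : Type*} [Fintype ι] [DecidableEq ι]

theorem one_add_exp_mul_I (φ : ℝ) :
    1 + exp (φ * I) = (2 * Real.cos (φ / 2) : ℝ) * exp ((φ / 2 : ℝ) * I) := by
  have hsq : exp ((φ / 2 : ℝ) * I) * exp ((φ / 2 : ℝ) * I) = exp (φ * I) := by
    rw [← exp_add]
    push_cast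
    ring_nf
  have hinv : exp (-(φ / 2 : ℝ) * I) * exp ((φ / 2 : ℝ) * I) = 1 := by
    rw [← exp_add, neg_mul, neg_add_cancel, exp_zero]
  rw [ofReal_mul, ofReal_cos, cos]
  push_cast at hsq hinv ⊢
  linear_combination -hsq - hinv

theorem sum_bits_exp_sum (z : ι → ℂ) :
    ∑ x : ι → Fin 2, exp (∑ m, ((x m).val : ℂ) * z m) = ∏ m, (1 + exp (z m)) := by
  have hpair : ∀ m, 1 + exp (z m) = ∑ b : Fin 2, exp ((b.val : ℂ) * z m) := by
    simp [Fin.sum_univ_two]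
  simp only [hpair, Fintype.prod_sum, exp_sum]

theorem sum_bits_cos_add_sum (c : ℝ) (φ : ι → ℝ) :
    ∑ x : ι → Fin 2, Real.cos (c + ∑ m, ((x m).val : ℝ) * φ m)
      = 2 ^ Fintype.card ι * Real.cos (c + ∑ m, φ m / 2) * ∏ m, Real.cos (φ m / 2) := by
  have hexp : ∑ x : ι → Fin 2, exp ((c + ∑ m, ((x m).val : ℝ) * φ m : ℝ) * I)
      = ((2 ^ Fintype.card ι * ∏ m, Real.cos (φ m / 2) : ℝ) : ℂ)
          * exp ((c + ∑ m, φ m / 2 : ℝ) * I) := by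
    calc ∑ x : ι → Fin 2, exp ((c + ∑ m, ((x m).val : ℝ) * φ m : ℝ) * I)
        = exp (c * I) * ∑ x : ι → Fin 2, exp (∑ m, ((x m).val : ℂ) * (φ m * I)) := by
          rw [Finset.mul_sum]
          refine Finset.sum_congr rfl fun x _ => ?_
          rw [← exp_add]
          push_cast
          rw [add_mul, Finset.sum_mul]
          simp only [mul_assoc]
      _ = exp (c * I) * ∏ m, ((2 * Real.cos (φ m / 2) : ℝ) * exp ((φ m / 2 : ℝ) * I)) := by
          simp only [sum_bits_exp_sum, one_add_exp_mul_I]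
      _ = _ := by
          rw [Finset.prod_mul_distrib, ← exp_sum]
          push_cast
          rw [Finset.prod_mul_distrib, Finset.prod_const, Finset.card_univ, add_mul, exp_add,
            Finset.sum_mul]
          ring
  have hre := congrArg re hexp
  simp only [re_sum, re_ofReal_mul, exp_ofReal_mul_I_re] at hre
  rw [hre]
  ring

end

/-- For `f ∈ ℝⁿ`, `c ∈ ℝ` and a fixed bit string `a`,
`∑_{x ∈ Z₂ⁿ} (−1)^{a·x} cos(f·x + c)
  = 2ⁿ cos(c + Σₘ (aₘπ + fₘ)/2) Πₘ cos((aₘπ + fₘ)/2)`. -/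
theorem sum_parity_cos (n : ℕ) (f : Fin n → ℝ) (c : ℝ) (a : Fin n → Fin 2) :
    ∑ x : Fin n → Fin 2,
        (-1 : ℝ) ^ (∑ m, (a m).val * (x m).val) *
          Real.cos ((∑ m, f m * ((x m).val : ℝ)) + c)
      = 2 ^ n * Real.cos (c + ∑ m, (((a m).val : ℝ) * Real.pi + f m) / 2) *
          ∏ m, Real.cos ((((a m).val : ℝ) * Real.pi + f m) / 2) := by
  calc _ = ∑ x : Fin n → Fin 2,
          Real.cos (c + ∑ m, ((x m).val : ℝ) * (((a m).val : ℝ) * Real.pi + f m)) :=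
        Finset.sum_congr rfl fun x _ =>
          neg_one_pow_sum_mul_cos (fun m => (a m).val) (fun m => (x m).val) f c
    _ = _ := by
      rw [sum_bits_cos_add_sum, Fintype.card_fin]
end

section
/- The full correlation function E(x) = ⟨+|^{⊗n} D(x)† U† X^{⊗n} U D(x) |+⟩^{⊗n} of an n-qubit IQP Bell test, where U is a fixed diagonal unitary and D(x) = ⊗ₘ Dₘ^{xₘ} with each Dₘ a single-qubit diagonal unitary, can be written as a convex-type combination E(x) = Σⱼ pⱼ cos(fⱼ·x + cⱼ) with real weights pⱼ ≥ 0 summing to 1, fⱼ ∈ ℝⁿ, cⱼ ∈ ℝ. -/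
/-!
Since `X^{⊗n}` maps `|s⟩` to `|s + 1⟩` (all bits flipped), `E(x) = Σₛ conj(aₛ) a_{s+1}` with
amplitudes `aₛ = Uₛₛ ∏ₘ dₘ(sₘ)^{xₘ} / √2ⁿ`. Each term is `2⁻ⁿ` times a unit complex number
whose phase is `arg(conj Uₛₛ U_{s+1,s+1}) + Σₘ xₘ arg(conj dₘ(sₘ) dₘ(sₘ+1))`, affine in `x`.
Reindexing by `s ↦ s + 1` conjugates the sum, so `E(x)` is real and equals the sum of the real
parts `2⁻ⁿ cos(…)`: a uniform mixture of `2ⁿ` cosines.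
-/

open Complex Finset
open scoped ComplexConjugate

theorem Matrix.IsDiag.norm_apply_self_eq_one {ι : Type*} [Fintype ι] [DecidableEq ι]
    {U : Matrix ι ι ℂ} (hUd : U.IsDiag) (hUu : U ∈ Matrix.unitaryGroup ι ℂ) (i : ι) :
    ‖U i i‖ = 1 := by
  have hii : (star U * U) i i = 1 := by
    rw [Matrix.mem_unitaryGroup_iff'.mp hUu, Matrix.one_apply_eq]
  rw [Matrix.mul_apply, Finset.sum_eq_single i (fun j _ hji => by simp [hUd hji]) (by simp),
    Matrix.star_apply, RCLike.star_def, conj_mul'] at hii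
  exact (pow_eq_one_iff_of_nonneg (norm_nonneg _) two_ne_zero).mp (by exact_mod_cast hii)

theorem isSelfAdjoint_sum_star_mul_comp {ι R : Type*} [Fintype ι] [NonUnitalSemiring R]
    [StarRing R] {σ : ι → ι} (hσ : Function.Involutive σ) (a : ι → R) :
    IsSelfAdjoint (∑ i, star (a i) * a (σ i)) := by
  rw [isSelfAdjoint_iff, star_sum]
  simp only [star_mul, star_star]
  calc ∑ i, star (a (σ i)) * a i = ∑ i, star (a (σ (σ i))) * a (σ i) :=
        (Equiv.sum_comp (hσ.toPerm σ) fun i => star (a (σ i)) * a i).symm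
    _ = ∑ i, star (a i) * a (σ i) := by simp only [hσ _]

theorem Complex.exp_arg_mul_I_of_norm_eq_one {z : ℂ} (hz : ‖z‖ = 1) : exp (arg z * I) = z := by
  simpa [hz] using norm_mul_exp_arg_mul_I z

theorem Complex.re_mul_prod_pow_of_norm_eq_one {ι : Type*} [Fintype ι] {c : ℂ} {w : ι → ℂ}
    (hc : ‖c‖ = 1) (hw : ∀ i, ‖w i‖ = 1) (k : ι → ℕ) :
    (c * ∏ i, w i ^ k i).re = Real.cos ((∑ i, arg (w i) * k i) + arg c) := by
  have hpow : ∀ i, w i ^ k i = exp ((arg (w i) * k i : ℝ) * I) := fun i => by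
    conv_lhs => rw [← exp_arg_mul_I_of_norm_eq_one (hw i), ← exp_nat_mul]
    push_cast; ring_nf
  conv_lhs => rw [Finset.prod_congr rfl fun i _ => hpow i, ← exp_sum,
    ← exp_arg_mul_I_of_norm_eq_one hc, ← exp_add]
  rw [← exp_ofReal_mul_I_re]
  push_cast
  rw [add_mul, Finset.sum_mul, add_comm]

namespace IQP

variable {n : ℕ}

def flipBits (s : Fin n → Fin 2) : Fin n → Fin 2 := fun m => s m + 1

theorem flipBits_involutive : Function.Involutive (flipBits (n := n)) := fun s => by
  funext m; simp only [flipBits]; generalize s m = a; revert a; decide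

theorem forall_ne_iff_eq_flipBits {s t : Fin n → Fin 2} : (∀ m, s m ≠ t m) ↔ t = flipBits s := by
  have hbit : ∀ a b : Fin 2, a ≠ b ↔ b = a + 1 := by decide
  simp only [hbit, funext_iff, flipBits]

theorem sum_mul_ite_forall_ne_mul {R : Type*} [NonAssocSemiring R] (a b : (Fin n → Fin 2) → R)
    (s : Fin n → Fin 2) :
    ∑ t, a s * (if ∀ m, s m ≠ t m then 1 else 0) * b t = a s * b (flipBits s) := by
  simp only [forall_ne_iff_eq_flipBits, mul_ite, mul_one, mul_zero, ite_mul, zero_mul,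
    Finset.sum_ite_eq', Finset.mem_univ, if_true]

/-- `⟨s| U D(x) |+⟩^{⊗n}`. -/
noncomputable def amplitude (U : Matrix (Fin n → Fin 2) (Fin n → Fin 2) ℂ)
    (d : Fin n → Fin 2 → ℂ) (x s : Fin n → Fin 2) : ℂ :=
  U s s * (∏ m, d m (s m) ^ (x m).val) * ((Real.sqrt 2 : ℝ) : ℂ)⁻¹ ^ n

theorem conj_amplitude_mul_amplitude_flipBits (U : Matrix (Fin n → Fin 2) (Fin n → Fin 2) ℂ)
    (d : Fin n → Fin 2 → ℂ) (x s : Fin n → Fin 2) :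
    conj (amplitude U d x s) * amplitude U d x (flipBits s) =
      ((2⁻¹ ^ n : ℝ) : ℂ) * (conj (U s s) * U (flipBits s) (flipBits s) *
        ∏ m, (conj (d m (s m)) * d m (s m + 1)) ^ (x m).val) := by
  have hsqrt : conj ((Real.sqrt 2 : ℝ) : ℂ)⁻¹ ^ n * ((Real.sqrt 2 : ℝ) : ℂ)⁻¹ ^ n =
      ((2⁻¹ ^ n : ℝ) : ℂ) := by
    rw [map_inv₀, conj_ofReal, ← mul_pow, ← mul_inv, ← ofReal_mul,
      Real.mul_self_sqrt zero_le_two]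
    push_cast; rfl
  simp only [amplitude, map_mul, map_prod, map_pow, mul_pow, Finset.prod_mul_distrib, flipBits]
  rw [← hsqrt]; ring

theorem re_conj_amplitude_mul_amplitude_flipBits {U : Matrix (Fin n → Fin 2) (Fin n → Fin 2) ℂ}
    (hU : ∀ s, ‖U s s‖ = 1) {d : Fin n → Fin 2 → ℂ} (hd : ∀ m i, ‖d m i‖ = 1)
    (x s : Fin n → Fin 2) :
    (conj (amplitude U d x s) * amplitude U d x (flipBits s)).re =
      2⁻¹ ^ n * Real.cos ((∑ m, arg (conj (d m (s m)) * d m (s m + 1)) * (x m).val) +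
        arg (conj (U s s) * U (flipBits s) (flipBits s))) := by
  rw [conj_amplitude_mul_amplitude_flipBits, re_ofReal_mul,
    re_mul_prod_pow_of_norm_eq_one (by simp [hU]) (by simp [hd])]

end IQP

open IQP in
/-- The full correlation function
`E(x) = ⟨+|^{⊗n} D(x)† U† X^{⊗n} U D(x) |+⟩^{⊗n}` of an `n`-qubit IQP Bell test,
with `U` a fixed diagonal unitary and `D(x) = ⊗ₘ Dₘ^{xₘ}` a tensor product of
single-qubit diagonal unitaries `Dₘ = diag(d m 0, d m 1)`, can be written as a
convex combination `E(x) = Σⱼ pⱼ cos(fⱼ·x + cⱼ)`. -/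
theorem iqp_correlator_convex_cosines (n : ℕ)
    (U : Matrix (Fin n → Fin 2) (Fin n → Fin 2) ℂ)
    (hUd : U.IsDiag) (hUu : U ∈ Matrix.unitaryGroup (Fin n → Fin 2) ℂ)
    (d : Fin n → Fin 2 → ℂ) (hd : ∀ m i, ‖d m i‖ = 1)
    (E : (Fin n → Fin 2) → ℂ)
    (hE : ∀ x : Fin n → Fin 2, E x =
      ∑ s : Fin n → Fin 2, ∑ t : Fin n → Fin 2,
        (starRingEnd ℂ)
            (U s s * (∏ m, d m (s m) ^ (x m).val) * ((Real.sqrt 2 : ℝ) : ℂ)⁻¹ ^ n) *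
          (if ∀ m, s m ≠ t m then 1 else 0) *
          (U t t * (∏ m, d m (t m) ^ (x m).val) * ((Real.sqrt 2 : ℝ) : ℂ)⁻¹ ^ n)) :
    ∃ (k : ℕ) (p : Fin k → ℝ) (f : Fin k → Fin n → ℝ) (c : Fin k → ℝ),
      (∀ j, 0 ≤ p j) ∧ (∑ j, p j = 1) ∧
      ∀ x : Fin n → Fin 2,
        E x = ((∑ j, p j * Real.cos ((∑ m, f j m * ((x m).val : ℝ)) + c j) : ℝ) : ℂ) := by
  have hE' : ∀ x, E x = ∑ s, conj (amplitude U d x s) * amplitude U d x (flipBits s) :=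
    fun x => (hE x).trans <| sum_congr rfl fun s _ =>
      sum_mul_ite_forall_ne_mul (fun s => conj (amplitude U d x s)) (amplitude U d x) s
  have hreal : ∀ x, ((E x).re : ℂ) = E x := fun x =>
    conj_eq_iff_re.mp <| by rw [hE' x]; exact isSelfAdjoint_sum_star_mul_comp flipBits_involutive _
  let e := (Fintype.equivFin (Fin n → Fin 2)).symm
  refine ⟨_, fun _ => 2⁻¹ ^ n,
    fun j m => arg (conj (d m (e j m)) * d m (e j m + 1)),
    fun j => arg (conj (U (e j) (e j)) * U (flipBits (e j)) (flipBits (e j))),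
    fun _ => by positivity, by simp, fun x => ?_⟩
  rw [← hreal x, e.sum_comp (fun s => 2⁻¹ ^ n * Real.cos ((∑ m,
      arg (conj (d m (s m)) * d m (s m + 1)) * (x m).val) +
      arg (conj (U s s) * U (flipBits s) (flipBits s)))), hE' x, re_sum]
  simp only [re_conj_amplitude_mul_amplitude_flipBits (hUd.norm_apply_self_eq_one hUu) hd]
end
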